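/- arXiv:math-ph/0501046 — 4 statements merged into one kernel-verified Lean document; each statement's English description precedes it below -/
import Mathlib

section
/- For every λ ∈ ℂ with Im λ > 0, there exists exactly one m ∈ ℂ with Im m > 0 satisfying the quadratic equation 2m² + λm + 1 = 0. -/
/-!
The two roots of `2m² + λm + 1` are `m` and `-λ/2 - m`, with product `1/2`. A positive real
product forces the imaginary parts of the roots to have opposite signs (or both to vanish), while
their sum `-Im λ / 2` is negative; hence exactly one root lies in the upper half-plane.
-/

section Quadratic

variable {K : Type*} [Field K] {a b c x : K}

theorem quadratic_eq_zero_iff_of_root (ha : a ≠ 0) (hx : a * x ^ 2 + b * x + c = 0) (z : K) :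
    a * z ^ 2 + b * z + c = 0 ↔ z = x ∨ z = -b / a - x := by
  have factor : a * z ^ 2 + b * z + c = (z - x) * (a * z + a * x + b) := by
    linear_combination hx
  have partner : a * z + a * x + b = 0 ↔ z = -b / a - x := by
    rw [eq_sub_iff_add_eq, eq_div_iff ha]
    constructor <;> intro h <;> linear_combination h
  rw [factor, mul_eq_zero, sub_eq_zero, partner]

theorem mul_neg_div_sub_self_of_quadratic_eq_zero (ha : a ≠ 0) (hx : a * x ^ 2 + b * x + c = 0) :
    x * (-b / a - x) = c / a := by
  field_simp
  linear_combination -hx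

end Quadratic

theorem Complex.im_pos_of_mul_eq_ofReal {p q : ℂ} {r : ℝ} (hr : 0 < r) (hpq : p * q = r)
    (hp : p.im < 0) : 0 < q.im := by
  have hp0 : p ≠ 0 := fun h ↦ by simp [h] at hp
  have hq : q = r * p⁻¹ := by rw [← hpq]; field_simp
  rw [hq, Complex.im_ofReal_mul, Complex.inv_im, neg_div]
  exact mul_pos hr (neg_pos.mpr (div_neg_of_neg_of_pos hp (Complex.normSq_pos.mpr hp0)))

theorem exists_im_pos_bethe_root {lam : ℂ} (hlam : 0 < lam.im) :
    ∃ m : ℂ, 0 < m.im ∧ 2 * m ^ 2 + lam * m + 1 = 0 := by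
  obtain ⟨s, hs⟩ := IsAlgClosed.exists_eq_mul_self (discrim (2 : ℂ) lam 1)
  obtain ⟨x, hx⟩ := exists_quadratic_eq_zero two_ne_zero ⟨s, hs⟩
  rw [← sq] at hx
  set y := -lam / 2 - x
  have hy : 2 * y ^ 2 + lam * y + 1 = 0 :=
    (quadratic_eq_zero_iff_of_root two_ne_zero hx y).mpr (Or.inr rfl)
  have hprod : x * y = ((1 / 2 : ℝ) : ℂ) := by
    rw [mul_neg_div_sub_self_of_quadratic_eq_zero two_ne_zero hx]; push_cast; ring
  have hsum : x.im + y.im = -lam.im / 2 := by simp [y]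
  have : x.im < 0 ∨ y.im < 0 := by
    by_contra!
    linarith
  rcases this with hx_neg | hy_neg
  · exact ⟨y, Complex.im_pos_of_mul_eq_ofReal one_half_pos hprod hx_neg, hy⟩
  · exact ⟨x, Complex.im_pos_of_mul_eq_ofReal one_half_pos (mul_comm y x ▸ hprod) hy_neg, hx⟩

/-- For every `λ ∈ ℂ` with `Im λ > 0` there is exactly one `m ∈ ℂ` with `Im m > 0`
satisfying `2m² + λm + 1 = 0`. -/
theorem stmt2 (lam : ℂ) (hlam : 0 < lam.im) :
    ∃! m : ℂ, 0 < m.im ∧ 2 * m ^ 2 + lam * m + 1 = 0 := by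
  obtain ⟨m, hm, hroot⟩ := exists_im_pos_bethe_root hlam
  refine ⟨m, ⟨hm, hroot⟩, ?_⟩
  rintro z ⟨hz, hzroot⟩
  rcases (quadratic_eq_zero_iff_of_root two_ne_zero hroot z).mp hzroot with rfl | rfl
  · rfl
  · have : (-lam / 2 - m).im = -lam.im / 2 - m.im := by simp
    linarith
end

section
/- Let v ∈ ℝ and let m : ℂ → ℂ satisfy m(λ) + λ⁻¹ + v λ⁻² + (2 + v²) λ⁻³ = O(|λ|⁻⁴) as |λ| → ∞. Define f(z) = −m(√2 (z + 1/z)) for z near 0, z ≠ 0. Then f(z) − z/√2 − (v/2) z² − (v²/(2√2)) z³ = O(|z|⁴) as z → 0. -/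
open Asymptotics Topology Filter

/-!
In the variable `w = λ⁻¹ = z / (√2 (1 + z²))`, which tends to `0` within `≠ 0` as `z` does, the
hypothesis says `f = w + v w² + (2 + v²) w³ + O(w⁴)`, and `w = O(z)`. Expanding,
`w = z/√2 - z³/√2 + O(z⁵)`, and the correction `-z³/√2` is cancelled by `2 w³ = z³/√2 + O(z⁵)`.
-/

lemma Asymptotics.isBigO_mul_of_tendsto {α 𝕜 : Type*} [NormedField 𝕜] {l : Filter α}
    {g R : α → 𝕜} {a : 𝕜} (hR : Tendsto R l (𝓝 a)) : (fun x => g x * R x) =O[l] g := by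
  simpa using (isBigO_refl g l).mul (hR.isBigO_one 𝕜)

lemma inv_mul_add_inv {K : Type*} [Field K] (c z : K) :
    (c * (z + z⁻¹))⁻¹ = z / (c * (1 + z ^ 2)) := by
  rcases eq_or_ne z 0 with rfl | hz
  · simp
  · rw [← inv_div]
    congr 1
    field_simp
    ring

section
variable {𝕜 : Type*} [NontriviallyNormedField 𝕜] {c : 𝕜}

lemma eventually_one_add_sq_ne_zero : ∀ᶠ z : 𝕜 in 𝓝 0, 1 + z ^ 2 ≠ 0 :=
  (continuous_const.add (continuous_pow 2)).continuousAt.eventually_ne (by simp)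

lemma isBigO_div_mul_one_add_sq (hc : c ≠ 0) :
    (fun z : 𝕜 => z / (c * (1 + z ^ 2))) =O[𝓝 0] fun z => z := by
  have hden : Continuous fun z : 𝕜 => c * (1 + z ^ 2) := by fun_prop
  simpa only [div_eq_mul_inv] using
    isBigO_mul_of_tendsto (hden.continuousAt.tendsto.inv₀ (by simp [hc]))

lemma tendsto_div_mul_one_add_sq_nhdsNE (hc : c ≠ 0) :
    Tendsto (fun z : 𝕜 => z / (c * (1 + z ^ 2))) (𝓝[≠] 0) (𝓝[≠] 0) := by
  refine tendsto_nhdsWithin_iff.2 ⟨?_, ?_⟩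
  · have : ContinuousAt (fun z : 𝕜 => z / (c * (1 + z ^ 2))) 0 :=
      continuousAt_id.div (by fun_prop) (by simp [hc])
    simpa using this.tendsto.mono_left nhdsWithin_le_nhds
  · filter_upwards [self_mem_nhdsWithin, nhdsWithin_le_nhds eventually_one_add_sq_ne_zero]
      with z (hz : z ≠ 0) hu
    exact div_ne_zero hz (mul_ne_zero hc hu)

end

lemma cubic_sub_taylor_eq {K : Type*} [Field K] {s : K} (hs : s ^ 2 = 2) (hs0 : s ≠ 0) (v z : K)
    (hu : 1 + z ^ 2 ≠ 0) :
    z / (s * (1 + z ^ 2)) + v * (z / (s * (1 + z ^ 2))) ^ 2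
        + (2 + v ^ 2) * (z / (s * (1 + z ^ 2))) ^ 3
        - (z / s + v / 2 * z ^ 2 + v ^ 2 / (2 * s) * z ^ 3)
      = z ^ 4 * -(((2 + z ^ 2) * (2 * z + s * v * (1 + z ^ 2))
          + v ^ 2 * z * (1 + (1 + z ^ 2) + (1 + z ^ 2) ^ 2)) / (2 * s * (1 + z ^ 2) ^ 3)) := by
  have h2 : (2 : K) ≠ 0 := hs ▸ pow_ne_zero 2 hs0
  field_simp
  linear_combination (-(z ^ 2 * s * v + 2 * z ^ 3 + z ^ 3 * v ^ 2 + z ^ 4 * s * v)) * hs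

lemma isBigO_cubic_sub_taylor (v : ℂ) :
    (fun z : ℂ => z / (√2 * (1 + z ^ 2)) + v * (z / (√2 * (1 + z ^ 2))) ^ 2
        + (2 + v ^ 2) * (z / (√2 * (1 + z ^ 2))) ^ 3
        - (z / √2 + v / 2 * z ^ 2 + v ^ 2 / (2 * √2) * z ^ 3)) =O[𝓝 0] fun z => z ^ 4 := by
  have hs : ((√2 : ℝ) : ℂ) ^ 2 = 2 := by norm_cast; simp
  have hs0 : ((√2 : ℝ) : ℂ) ≠ 0 := by simp
  refine EventuallyEq.trans_isBigO ?_ (isBigO_mul_of_tendsto (R := ?R) (a := ?R 0) ?_)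
  · filter_upwards [eventually_one_add_sq_ne_zero] with z hu
    exact cubic_sub_taylor_eq hs hs0 v z hu
  · exact (ContinuousAt.div (by fun_prop) (by fun_prop) (by simp)).neg.tendsto

/-- If `m(λ) + λ⁻¹ + vλ⁻² + (2 + v²)λ⁻³ = O(λ⁻⁴)` as `|λ| → ∞` and
`f(z) = −m(√2(z + 1/z))` near `0`, then
`f(z) − z/√2 − (v/2)z² − (v²/(2√2))z³ = O(z⁴)` as `z → 0`. -/
theorem stmt6 (v : ℝ) (m f : ℂ → ℂ)
    (hm : (fun lam => m lam + lam⁻¹ + (v : ℂ) * (lam⁻¹) ^ 2 + (2 + (v : ℂ) ^ 2) * (lam⁻¹) ^ 3)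
      =O[Bornology.cobounded ℂ] fun lam => (lam⁻¹) ^ 4)
    (hf : ∀ᶠ z in 𝓝[≠] (0 : ℂ), f z = -m ((Real.sqrt 2 : ℂ) * (z + z⁻¹))) :
    (fun z => f z - z / (Real.sqrt 2 : ℂ) - ((v : ℂ) / 2) * z ^ 2
        - ((v : ℂ) ^ 2 / (2 * (Real.sqrt 2 : ℂ))) * z ^ 3)
      =O[𝓝[≠] (0 : ℂ)] fun z => z ^ 4 := by
  set w : ℂ → ℂ := fun z => z / (√2 * (1 + z ^ 2))
  have hs0 : (√2 : ℂ) ≠ 0 := by simp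
  have hmw : (fun z => m (w z)⁻¹ + w z + v * w z ^ 2 + (2 + (v : ℂ) ^ 2) * w z ^ 3)
      =O[𝓝[≠] 0] fun z => w z ^ 4 := by
    simpa only [Function.comp_def, inv_inv] using
      hm.comp_tendsto (tendsto_inv₀_nhdsNE_zero.comp (tendsto_div_mul_one_add_sq_nhdsNE hs0))
  have hw : (fun z => w z ^ 4) =O[𝓝[≠] 0] fun z => z ^ 4 :=
    ((isBigO_div_mul_one_add_sq hs0).pow 4).mono nhdsWithin_le_nhds
  refine EventuallyEq.trans_isBigO ?_
    ((hmw.trans hw).neg_left.add ((isBigO_cubic_sub_taylor v).mono nhdsWithin_le_nhds))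
  filter_upwards [hf] with z hz
  rw [hz, ← inv_inv ((√2 : ℂ) * _), inv_mul_add_inv]
  ring
end

section
/- Let 0 < a < 1 be real. For every z ∈ ℂ with |z| < a, the principal logarithm of the Blaschke factor satisfies log((a − z)/(1 − a z)) = log a + Σ_{n=1}^∞ ((aⁿ − a⁻ⁿ)/n) zⁿ, the series converging absolutely. -/
open Complex

/-- For `0 < a < 1` and `|z| < a`, the principal logarithm of the Blaschke factor
satisfies `log((a − z)/(1 − az)) = log a + Σ_{n≥1} ((aⁿ − a⁻ⁿ)/n) zⁿ`,
with the series converging absolutely. -/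
theorem stmt8 (a : ℝ) (ha0 : 0 < a) (ha1 : a < 1) (z : ℂ) (hz : ‖z‖ < a) :
    Summable (fun n : ℕ =>
      ‖(((a : ℂ) ^ (n + 1) - (a : ℂ) ^ (-(n + 1 : ℤ))) / ((n : ℂ) + 1)) * z ^ (n + 1)‖) ∧
    Complex.log (((a : ℂ) - z) / (1 - (a : ℂ) * z)) =
      Complex.log (a : ℂ) +
        ∑' n : ℕ, (((a : ℂ) ^ (n + 1) - (a : ℂ) ^ (-(n + 1 : ℤ))) / ((n : ℂ) + 1)) * z ^ (n + 1) := by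
  have ha0' : (a : ℂ) ≠ 0 := by exact_mod_cast ha0.ne'
  have hzabs : ‖z‖ < 1 := hz.trans ha1
  -- norms of the two geometric-like pieces
  have h1n : ‖(a : ℂ) * z‖ < 1 := by
    rw [norm_mul]
    calc ‖(a:ℂ)‖ * ‖z‖ < ‖(a:ℂ)‖ * 1 := by
          apply mul_lt_mul_of_pos_left _ (by simpa [Complex.norm_real, Real.norm_eq_abs, abs_of_pos ha0] using ha0)
          simpa using hzabs
      _ = ‖(a:ℂ)‖ := mul_one _
      _ < 1 := by simpa [Complex.norm_real, Real.norm_eq_abs, abs_of_pos ha0] using ha1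
  have h2n : ‖z / (a : ℂ)‖ < 1 := by
    rw [norm_div, div_lt_one (by simpa [Complex.norm_real, Real.norm_eq_abs, abs_of_pos ha0] using ha0)]
    simpa [Complex.norm_real, Real.norm_eq_abs, abs_of_pos ha0] using hz
  have h1 := Complex.hasSum_taylorSeries_neg_log h1n
  have h2 := Complex.hasSum_taylorSeries_neg_log h2n
  have hsub := h1.sub h2
  -- rewrite the general term
  have hterm : ∀ n : ℕ, ((a:ℂ)*z) ^ (n+1) / ((n+1 : ℕ) : ℂ) - (z/(a:ℂ)) ^ (n+1) / ((n+1 : ℕ) : ℂ)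
      = (((a : ℂ) ^ (n + 1) - (a : ℂ) ^ (-(n + 1 : ℤ))) / ((n : ℂ) + 1)) * z ^ (n + 1) := by
    intro n
    have hn : ((n : ℂ) + 1) ≠ 0 := by exact_mod_cast (Nat.cast_add_one_ne_zero n : ((n:ℂ)+1) ≠ 0)
    rw [zpow_neg, show ((n:ℤ)+1) = ((n+1 : ℕ) : ℤ) by push_cast; ring, zpow_natCast]
    push_cast
    rw [div_pow, mul_pow]
    field_simp
  have hshift : HasSum (fun n : ℕ => (((a : ℂ) ^ (n + 1) - (a : ℂ) ^ (-(n + 1 : ℤ))) / ((n : ℂ) + 1)) * z ^ (n + 1))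
      (-Complex.log (1 - (a:ℂ)*z) - -Complex.log (1 - z/(a:ℂ))) := by
    have h' := (hasSum_nat_add_iff' (f := fun n : ℕ => ((a:ℂ)*z) ^ n / (n : ℂ) - (z/(a:ℂ)) ^ n / (n : ℂ)) 1).mpr hsub
    simp only [Finset.range_one, Finset.sum_singleton, pow_zero, Nat.cast_zero, div_zero, sub_zero, sub_self] at h'
    have heq : (fun n : ℕ => ((a:ℂ)*z) ^ (n+1) / ((n+1 : ℕ) : ℂ) - (z/(a:ℂ)) ^ (n+1) / ((n+1 : ℕ) : ℂ))
        = fun n : ℕ => (((a : ℂ) ^ (n + 1) - (a : ℂ) ^ (-(n + 1 : ℤ))) / ((n : ℂ) + 1)) * z ^ (n + 1) :=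
      funext hterm
    rw [← heq]
    convert h' using 2
  -- auxiliary: positivity of real parts
  have hposre : ∀ w : ℂ, ‖w‖ < 1 → 0 < (1 - w).re := by
    intro w hw
    have : w.re ≤ ‖w‖ := (abs_le.mp (Complex.abs_re_le_norm w)).2
    simp only [Complex.sub_re, Complex.one_re]
    linarith
  have hu := hposre _ h2n
  have hv := hposre _ h1n
  have hvne : (1 - (a:ℂ)*z) ≠ 0 := by
    intro h; rw [h] at hv; simp at hv
  have hune : (1 - z/(a:ℂ)) ≠ 0 := by
    intro h; rw [h] at hu; simp at hu
  have hargu : |Complex.arg (1 - z/(a:ℂ))| < Real.pi / 2 :=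
    Complex.abs_arg_lt_pi_div_two_iff.mpr (Or.inl hu)
  have hargv : |Complex.arg (1 - (a:ℂ)*z)| < Real.pi / 2 :=
    Complex.abs_arg_lt_pi_div_two_iff.mpr (Or.inl hv)
  have hargvne : Complex.arg (1 - (a:ℂ)*z) ≠ Real.pi := by
    intro h
    rw [h] at hargv
    have := Real.pi_pos
    rw [abs_of_pos this] at hargv
    linarith
  have hloginv : Complex.log (1 - (a:ℂ)*z)⁻¹ = -Complex.log (1 - (a:ℂ)*z) :=
    Complex.log_inv _ hargvne
  have hlogmul : Complex.log ((1 - z/(a:ℂ)) * (1 - (a:ℂ)*z)⁻¹)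
      = Complex.log (1 - z/(a:ℂ)) + Complex.log (1 - (a:ℂ)*z)⁻¹ := by
    apply Complex.log_mul hune (inv_ne_zero hvne)
    have hai : |Complex.arg (1 - (a:ℂ)*z)⁻¹| = |Complex.arg (1 - (a:ℂ)*z)| :=
      Complex.abs_arg_inv _
    have hb1 := (abs_lt.mp hargu)
    have hb2 : |Complex.arg (1 - (a:ℂ)*z)⁻¹| < Real.pi / 2 := by rw [hai]; exact hargv
    have hb2' := abs_lt.mp hb2
    constructor
    · linarith
    · linarith
  have hfact : ((a:ℂ) - z) / (1 - (a:ℂ)*z) = (a:ℂ) * ((1 - z/(a:ℂ)) * (1 - (a:ℂ)*z)⁻¹) := by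
    field_simp
  have hmulne : (1 - z/(a:ℂ)) * (1 - (a:ℂ)*z)⁻¹ ≠ 0 :=
    mul_ne_zero hune (inv_ne_zero hvne)
  have hloga : Complex.log ((a:ℂ)) = (Real.log a : ℂ) := (Complex.ofReal_log ha0.le).symm
  constructor
  · -- summability of norms
    have hg1 : Summable (fun n : ℕ => ‖(a:ℂ)*z‖ ^ (n+1)) :=
      ((summable_geometric_of_lt_one (norm_nonneg _) h1n).mul_left ‖(a:ℂ)*z‖).congr
        (fun n => by rw [← pow_succ'])
    have hg2 : Summable (fun n : ℕ => ‖z/(a:ℂ)‖ ^ (n+1)) :=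
      ((summable_geometric_of_lt_one (norm_nonneg _) h2n).mul_left ‖z/(a:ℂ)‖).congr
        (fun n => by rw [← pow_succ'])
    refine (hg1.add hg2).of_nonneg_of_le (fun n => norm_nonneg _) (fun n => ?_)
    rw [← hterm n]
    calc ‖((a:ℂ)*z) ^ (n+1) / ((n+1 : ℕ) : ℂ) - (z/(a:ℂ)) ^ (n+1) / ((n+1 : ℕ) : ℂ)‖
        ≤ ‖((a:ℂ)*z) ^ (n+1) / ((n+1 : ℕ) : ℂ)‖ + ‖(z/(a:ℂ)) ^ (n+1) / ((n+1 : ℕ) : ℂ)‖ :=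
          norm_sub_le _ _
      _ ≤ ‖(a:ℂ)*z‖ ^ (n+1) + ‖z/(a:ℂ)‖ ^ (n+1) := by
          gcongr <;>
          · rw [norm_div, norm_pow]
            refine div_le_self (by positivity) ?_
            rw [Complex.norm_natCast]
            exact_mod_cast Nat.succ_le_succ (Nat.zero_le n)
  · rw [hshift.tsum_eq, hfact, Complex.log_ofReal_mul ha0 hmulne, hlogmul, hloginv, hloga]
    ring
end

section
/- Identify the vertices of the rooted binary tree with finite lists of Booleans (the root being the empty list, each vertex x having children x ++ [false] and x ++ [true]). Let c : List Bool → ℝ with c ≥ 0, let u : List Bool → ℝ, and let N ∈ ℕ. Assume u(x) ≥ (1/2)(u(x ++ [false]) + u(x ++ [true])) − c(x) for every vertex x, and u(x) = 0 whenever the length of x is at least N. Then u at the root satisfies u([]) ≥ − Σ_{n=0}^{N−1} 2^{−n} Σ_{x : length x = n} c(x). -/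
lemma split_sum (v : List Bool → ℝ) (n : ℕ) :
    ∑ f : Fin (n + 1) → Bool, v (List.ofFn f)
      = ∑ g : Fin n → Bool, (v (List.ofFn g ++ [false]) + v (List.ofFn g ++ [true])) := by
  rw [← Fintype.sum_equiv (Fin.snocEquiv (fun _ => Bool))
      (fun p => v (List.ofFn (Fin.snocEquiv (fun _ => Bool) p)))
      (fun f => v (List.ofFn f)) (fun p => rfl)]
  rw [Fintype.sum_prod_type_right]
  refine Finset.sum_congr rfl fun g _ => ?_
  rw [Fintype.sum_bool]
  have h : ∀ b : Bool, List.ofFn (Fin.snocEquiv (fun _ => Bool) (b, g))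
      = List.ofFn g ++ [b] := by
    intro b
    rw [List.ofFn_succ']
    simp [Fin.snocEquiv, Fin.snoc, List.concat_eq_append]
  rw [h true, h false]
  ring

/-- Iteration scheme on the rooted binary tree (vertices = finite Boolean lists):
if `u(x) ≥ (1/2)(u(x++[false]) + u(x++[true])) − c(x)` with `c ≥ 0`, and `u`
vanishes at depth `≥ N`, then `u` at the root is bounded below by
`−Σ_{n<N} 2⁻ⁿ Σ_{|x|=n} c(x)`. -/
theorem stmt14 (c u : List Bool → ℝ) (hc : ∀ x, 0 ≤ c x) (N : ℕ)
    (hstep : ∀ x : List Bool,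
      u x ≥ (1 / 2) * (u (x ++ [false]) + u (x ++ [true])) - c x)
    (hzero : ∀ x : List Bool, N ≤ x.length → u x = 0) :
    u [] ≥ -∑ n ∈ Finset.range N, (2 : ℝ)⁻¹ ^ n * ∑ f : Fin n → Bool, c (List.ofFn f) := by
  set A : ℕ → ℝ := fun n => (2 : ℝ)⁻¹ ^ n * ∑ f : Fin n → Bool, u (List.ofFn f) with hA
  have hstepA : ∀ n, A (n + 1) - A n ≤ (2 : ℝ)⁻¹ ^ n * ∑ f : Fin n → Bool, c (List.ofFn f) := by
    intro n
    have h1 : ∑ f : Fin n → Bool, u (List.ofFn f)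
        ≥ ∑ f : Fin n → Bool,
          ((1 / 2) * (u (List.ofFn f ++ [false]) + u (List.ofFn f ++ [true])) - c (List.ofFn f)) :=
      Finset.sum_le_sum fun f _ => hstep (List.ofFn f)
    rw [Finset.sum_sub_distrib, ← Finset.mul_sum, ← split_sum u n] at h1
    have h2 : (0 : ℝ) < (2 : ℝ)⁻¹ ^ n := by positivity
    have := mul_le_mul_of_nonneg_left h1 h2.le
    simp only [hA]
    rw [pow_succ]
    nlinarith [this]
  have hAN : A N = 0 := by
    simp only [hA]
    have : ∀ f : Fin N → Bool, u (List.ofFn f) = 0 := fun f =>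
      hzero _ (by simp)
    rw [Finset.sum_congr rfl fun f _ => this f]
    simp
  have hA0 : A 0 = u [] := by simp [hA, List.ofFn_zero]
  have htel : A N - A 0 = ∑ n ∈ Finset.range N, (A (n + 1) - A n) :=
    (Finset.sum_range_sub A N).symm
  have hsum : A N - A 0 ≤ ∑ n ∈ Finset.range N, (2 : ℝ)⁻¹ ^ n * ∑ f : Fin n → Bool, c (List.ofFn f) := by
    rw [htel]
    exact Finset.sum_le_sum fun n _ => hstepA n
  rw [hAN, hA0] at hsum
  linarith
end
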